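/- Upper bound on PS (by exchanging x with x' and y with y' in the PN bound): for every P as in the context, P(Y₁ = true ∧ X = false ∧ Y = false) ≤ P(Y₁ = true) − P(X = true ∧ Y = true); consequently, if P(X = false ∧ Y = false) > 0 then PS ≤ min {1, (P(Y₁ = true) − P(X = true ∧ Y = true)) / P(X = false ∧ Y = false)}. -/

import Mathlib

/-- The probability of an event `E` under a mass function `P` on a finite type. -/
noncomputable def prob {Ω : Type*} [Fintype Ω] (P : Ω → ℝ) (E : Set Ω) : ℝ :=
  ∑ ω, E.indicator P ω

/-- The binary counterfactual sample space: coordinates `(Y₀, Y₁, X)`, i.e. the potential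
outcomes `Y₀ = Y_{x'}` and `Y₁ = Y_x` and the treatment `X`. -/
abbrev BOmega : Type := Bool × Bool × Bool

/-- The observed outcome defined by consistency: `Y := if X then Y₁ else Y₀`. -/
def Yobs (ω : BOmega) : Bool := if ω.2.2 then ω.2.1 else ω.1

/-! By consistency the event `{X = true ∧ Y = true}` is `{Y₁ = true ∧ X = true}`, so
`P(Y₁ = true) − P(X = true ∧ Y = true) = P(Y₁ = true ∧ X = false)`, which dominates
`P(Y₁ = true ∧ X = false ∧ Y = false)` by monotonicity; so does `P(X = false ∧ Y = false)`,
giving `PS ≤ 1`. -/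

section Prob

variable {Ω : Type*} [Fintype Ω] (P : Ω → ℝ) {E F : Set Ω}

theorem prob_mono (hP0 : ∀ ω, 0 ≤ P ω) (h : E ⊆ F) : prob P E ≤ prob P F :=
  Finset.sum_le_sum fun ω _ => Set.indicator_le_indicator_of_subset h hP0 ω

theorem prob_sdiff (h : F ⊆ E) : prob P (E \ F) = prob P E - prob P F := by
  simp only [prob, Set.indicator_sdiff h, Pi.sub_apply, Finset.sum_sub_distrib]

end Prob

theorem ps_upper_bound_general
    (P : BOmega → ℝ) (hP0 : ∀ ω, 0 ≤ P ω) :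
    (prob P {ω | ω.2.1 = true ∧ ω.2.2 = false ∧ Yobs ω = false} ≤
      prob P {ω | ω.2.1 = true} - prob P {ω | ω.2.2 = true ∧ Yobs ω = true}) ∧
    (0 < prob P {ω | ω.2.2 = false ∧ Yobs ω = false} →
      prob P {ω | ω.2.1 = true ∧ ω.2.2 = false ∧ Yobs ω = false} /
          prob P {ω | ω.2.2 = false ∧ Yobs ω = false} ≤
        min 1 ((prob P {ω | ω.2.1 = true} - prob P {ω | ω.2.2 = true ∧ Yobs ω = true}) /
          prob P {ω | ω.2.2 = false ∧ Yobs ω = false})) := by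
  have hxy_sub : {ω : BOmega | ω.2.2 = true ∧ Yobs ω = true} ⊆ {ω | ω.2.1 = true} := by
    rintro ⟨y₀, y₁, x⟩ ⟨rfl, hy⟩
    simpa [Yobs] using hy
  have hnum_sub : {ω : BOmega | ω.2.1 = true ∧ ω.2.2 = false ∧ Yobs ω = false} ⊆
      {ω | ω.2.1 = true} \ {ω | ω.2.2 = true ∧ Yobs ω = true} := by
    rintro ⟨y₀, y₁, x⟩ ⟨hy₁, rfl, -⟩
    simpa using hy₁
  have key := (prob_mono P hP0 hnum_sub).trans_eq (prob_sdiff P hxy_sub)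
  refine ⟨key, fun hpos => le_min ?_ (div_le_div_of_nonneg_right key hpos.le)⟩
  exact (div_le_one hpos).2 (prob_mono P hP0 fun ω hω => hω.2)

/-- Upper bound on PS: `P(y_x, x', y') ≤ P(y_x) − P(x, y)`; consequently, if
`P(x', y') > 0` then `PS ≤ min {1, (P(y_x) − P(x, y)) / P(x', y')}`. -/
theorem ps_upper_bound
    (P : BOmega → ℝ) (hP0 : ∀ ω, 0 ≤ P ω) (hP1 : ∑ ω, P ω = 1) :
    (prob P {ω | ω.2.1 = true ∧ ω.2.2 = false ∧ Yobs ω = false} ≤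
      prob P {ω | ω.2.1 = true} - prob P {ω | ω.2.2 = true ∧ Yobs ω = true}) ∧
    (0 < prob P {ω | ω.2.2 = false ∧ Yobs ω = false} →
      prob P {ω | ω.2.1 = true ∧ ω.2.2 = false ∧ Yobs ω = false} /
          prob P {ω | ω.2.2 = false ∧ Yobs ω = false} ≤
        min 1 ((prob P {ω | ω.2.1 = true} - prob P {ω | ω.2.2 = true ∧ Yobs ω = true}) /
          prob P {ω | ω.2.2 = false ∧ Yobs ω = false})) :=
  ps_upper_bound_general P hP0
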